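/- For every integer m ≥ 0, π/5 = ∑_{n=0}^∞ ((−1)^n/(2n+1)) · L_{2m(2n+1)} · (2√(5 − 2√5) / (L_{2m} + √(L_{2m}² + 4(5 − 2√5))))^{2n+1}, where the series on the right converges. -/

import Mathlib

/-- Lucas numbers: `L 0 = 2`, `L 1 = 1`, `L (n+2) = L (n+1) + L n`. -/
def lucasNum : ℕ → ℕ
  | 0 => 2
  | 1 => 1
  | n + 2 => lucasNum (n + 1) + lucasNum n

noncomputable def phiR : ℝ := (1 + Real.sqrt 5) / 2
noncomputable def psiR : ℝ := (1 - Real.sqrt 5) / 2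

lemma sqrt5_sq : (Real.sqrt 5) ^ 2 = 5 := Real.sq_sqrt (by norm_num)

lemma lucasNum_eq (n : ℕ) : (lucasNum n : ℝ) = phiR ^ n + psiR ^ n := by
  have h5 := sqrt5_sq
  have hφ : phiR ^ 2 = phiR + 1 := by unfold phiR; nlinarith
  have hψ : psiR ^ 2 = psiR + 1 := by unfold psiR; nlinarith
  induction n using Nat.twoStepInduction with
  | zero => norm_num [lucasNum, phiR, psiR]
  | one => norm_num [lucasNum, phiR, psiR]
  | more n ih1 ih2 =>
      show ((lucasNum (n+1) + lucasNum n : ℕ) : ℝ) = _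
      push_cast
      rw [ih1, ih2]
      linear_combination (-(phiR ^ n)) * hφ + (-(psiR ^ n)) * hψ

lemma two_le_add_inv {a : ℝ} (ha : 1 ≤ a) : 2 ≤ a + a⁻¹ := by
  have ha0 : 0 < a := lt_of_lt_of_le one_pos ha
  have h : a + a⁻¹ - 2 = (a - 1)^2 / a := by field_simp; ring
  have h2 : 0 ≤ (a - 1)^2 / a := by positivity
  linarith

lemma lt_one_of_sq_lt {x : ℝ} (h : 0 < 1 - x^2) : x < 1 := by
  nlinarith [sq_nonneg (x - 1)]

lemma four_expr_pos {t a : ℝ} (ht0 : 0 < t) (ht1 : t < 1) :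
    0 < 4*t^2 + 4*t*a^2*(1-t) + 4*t := by
  nlinarith [mul_nonneg (mul_nonneg ht0.le (sq_nonneg a)) (by linarith : (0:ℝ) ≤ 1 - t)]

lemma tan_pi_div_five_sq : Real.tan (Real.pi / 5) ^ 2 = 5 - 2 * Real.sqrt 5 := by
  have h5 := sqrt5_sq
  have hπ := Real.pi_pos
  have hcos := Real.cos_pi_div_five
  have h5nn : (0:ℝ) ≤ Real.sqrt 5 := Real.sqrt_nonneg 5
  have hcpos : 0 < Real.cos (Real.pi/5) := by rw [hcos]; positivity
  have hpyth := Real.sin_sq_add_cos_sq (Real.pi/5)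
  rw [Real.tan_eq_sin_div_cos, div_pow, div_eq_iff (by positivity)]
  linear_combination hpyth +
    (-(6 - 2*Real.sqrt 5) * (Real.cos (Real.pi/5) + (1+Real.sqrt 5)/4)) * hcos +
    ((Real.sqrt 5 - 1)/8) * h5

lemma arctan_sqrt_T : Real.arctan (Real.sqrt (5 - 2 * Real.sqrt 5)) = Real.pi / 5 := by
  have hπ := Real.pi_pos
  have hcos := Real.cos_pi_div_five
  have h5nn : (0:ℝ) ≤ Real.sqrt 5 := Real.sqrt_nonneg 5
  have hcpos : 0 < Real.cos (Real.pi/5) := by rw [hcos]; positivity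
  have hsin : 0 < Real.sin (Real.pi/5) :=
    Real.sin_pos_of_pos_of_lt_pi (by positivity) (by linarith)
  have htan0 : 0 ≤ Real.tan (Real.pi/5) := by
    rw [Real.tan_eq_sin_div_cos]; positivity
  rw [← tan_pi_div_five_sq, Real.sqrt_sq htan0,
    Real.arctan_tan (by linarith) (by linarith)]

set_option maxHeartbeats 1000000 in
theorem pi_div_five_lucas_series (m : ℕ) :
    HasSum
      (fun n : ℕ => (-1 : ℝ) ^ n / (2 * (n : ℝ) + 1) *
        (lucasNum (2 * m * (2 * n + 1)) : ℝ) *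
        (2 * Real.sqrt (5 - 2 * Real.sqrt 5) / ((lucasNum (2 * m) : ℝ) +
          Real.sqrt ((lucasNum (2 * m) : ℝ) ^ 2 +
            4 * (5 - 2 * Real.sqrt 5)))) ^ (2 * n + 1))
      (Real.pi / 5) := by
  have h5 := sqrt5_sq
  have h5nn : (0:ℝ) ≤ Real.sqrt 5 := Real.sqrt_nonneg 5
  have h5lb : (2:ℝ) < Real.sqrt 5 := by nlinarith
  have h5ub : Real.sqrt 5 < 5/2 := by nlinarith
  set T : ℝ := 5 - 2 * Real.sqrt 5 with hTdef
  have hT0 : 0 < T := by rw [hTdef]; linarith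
  have hT1 : T < 1 := by rw [hTdef]; linarith
  set t : ℝ := Real.sqrt T with htdef
  have ht2 : t ^ 2 = T := Real.sq_sqrt hT0.le
  have ht0 : 0 < t := Real.sqrt_pos.mpr hT0
  have ht1 : t < 1 := by
    rw [htdef, show (1:ℝ) = Real.sqrt 1 by simp]
    exact Real.sqrt_lt_sqrt hT0.le (by linarith)
  have hφ1 : 1 ≤ phiR := by unfold phiR; linarith
  have hψφ : phiR * psiR = -1 := by unfold phiR psiR; nlinarith
  set a : ℝ := phiR ^ (2*m) with ha
  have ha1 : 1 ≤ a := one_le_pow₀ hφ1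
  have ha0 : 0 < a := lt_of_lt_of_le one_pos ha1
  have hinv : a * a⁻¹ = 1 := mul_inv_cancel₀ ha0.ne'
  have hb : psiR ^ (2*m) = a⁻¹ := by
    have h1 : psiR ^ (2*m) * a = 1 := by
      rw [ha, ← mul_pow, mul_comm psiR phiR, hψφ]
      simp [pow_mul]
    exact eq_inv_of_mul_eq_one_left h1
  set L : ℝ := ((lucasNum (2*m) : ℕ) : ℝ) with hLdef
  have hL : L = a + a⁻¹ := by rw [hLdef, lucasNum_eq, ← ha, hb]
  set s : ℝ := Real.sqrt (L^2 + 4*T) with hsdef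
  have hLpos : 0 < L := by
    rw [hL]
    have : 0 < a⁻¹ := by positivity
    linarith
  have hs2 : s ^ 2 = L^2 + 4*T := Real.sq_sqrt (by positivity)
  have hs0 : 0 < s := Real.sqrt_pos.mpr (by positivity)
  have hd0 : 0 < L + s := by linarith
  set x : ℝ := 2 * t / (L + s) with hx
  have hx0 : 0 < x := by rw [hx]; positivity
  have e1 : x * (L + s) = 2 * t := by rw [hx]; field_simp
  clear_value T t a L s x
  have hkey : x * L = t * (1 - x^2) := by
    have e2 : x^2 * (L+s)^2 = 4*t^2 := by
      linear_combination (x*(L+s) + 2*t) * e1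
    have h2 : (x*L - t*(1-x^2)) * (L+s)^2 = 0 := by
      linear_combination (L*(L+s)) * e1 + t * e2 + (-t) * hs2 + (4*t) * ht2
    rcases mul_eq_zero.mp h2 with h | h
    · linarith
    · exact absurd h (by positivity)
  have h1x2 : 0 < 1 - x^2 := by
    have hxL : 0 < t * (1 - x^2) := by rw [← hkey]; exact mul_pos hx0 hLpos
    exact pos_of_mul_pos_right hxL ht0.le
  have hx1 : x < 1 := lt_one_of_sq_lt h1x2
  have haxlt : a * x < 1 := by
    have haxdiff : s^2 - (2*t*a - L)^2 = 4*t^2 + 4*t*a^2*(1-t) + 4*t := by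
      linear_combination hs2 + (4*t*a)*hL + (4*t)*hinv + (-4)*ht2
    have hpos := four_expr_pos (a := a) ht0 ht1
    have h1 : (2*t*a - L)^2 < s^2 := by linarith
    have h2 : 2*t*a - L < s := lt_of_pow_lt_pow_left₀ 2 hs0.le h1
    have h3 : a * x = 2*t*a / (L+s) := by
      rw [eq_div_iff hd0.ne']
      linear_combination a * e1
    rw [h3, div_lt_one hd0]; linarith
  have hbxle : a⁻¹ * x ≤ a * x := by
    have hA : a⁻¹ ≤ a := by
      have h1 : a⁻¹ ≤ 1 := by rw [inv_le_one_iff₀]; right; exact ha1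
      linarith
    exact mul_le_mul_of_nonneg_right hA hx0.le
  have hbx0 : 0 < a⁻¹ * x := by positivity
  have hg : HasSum (fun n : ℕ => (-1:ℝ) ^ n * (a*x) ^ (2*n+1) / ((2*n+1 : ℕ) : ℝ))
      (Real.arctan (a*x)) := by
    apply Real.hasSum_arctan
    rw [Real.norm_eq_abs, abs_of_pos (by positivity)]; exact haxlt
  have hh : HasSum (fun n : ℕ => (-1:ℝ) ^ n * (a⁻¹*x) ^ (2*n+1) / ((2*n+1 : ℕ) : ℝ))
      (Real.arctan (a⁻¹*x)) := by
    apply Real.hasSum_arctan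
    rw [Real.norm_eq_abs, abs_of_pos hbx0]
    exact lt_of_le_of_lt hbxle haxlt
  have hval : Real.arctan (a*x) + Real.arctan (a⁻¹*x) = Real.pi / 5 := by
    have hprod : (a*x) * (a⁻¹*x) = x^2 := by
      field_simp
    rw [Real.arctan_add (by rw [hprod]; linarith)]
    have harg : (a*x + a⁻¹*x) / (1 - (a*x) * (a⁻¹*x)) = t := by
      rw [hprod, div_eq_iff h1x2.ne']
      have h4 : a*x + a⁻¹*x = x * L := by rw [hL]; ring
      rw [h4, hkey]
    rw [harg, htdef, hTdef]
    exact arctan_sqrt_T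
  rw [← hval]
  have hfun : (fun n : ℕ => (-1 : ℝ) ^ n / (2 * (n : ℝ) + 1) *
        ((lucasNum (2 * m * (2 * n + 1)) : ℕ) : ℝ) * x ^ (2 * n + 1)) =
      fun n : ℕ => (-1:ℝ) ^ n * (a*x) ^ (2*n+1) / ((2*n+1 : ℕ) : ℝ) +
        (-1:ℝ) ^ n * (a⁻¹*x) ^ (2*n+1) / ((2*n+1 : ℕ) : ℝ) := by
    funext n
    rw [lucasNum_eq, pow_mul phiR, pow_mul psiR, ← ha, hb]
    push_cast
    ring
  rw [hfun]
  exact hg.add hh
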